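/- arXiv:2510.07324 — 5 statements merged into one kernel-verified Lean document; each statement's English description precedes it below -/
import Mathlib

section
/- Let N ≥ 2, let Λ and Λ̃ be diagonal d×d matrices with positive diagonal entries, and let Q_0, …, Q_N and Q̃_0, …, Q̃_N be orthogonal d×d matrices. Set A_p = Q_p Λ Q_{p−1}ᵀ, B_p = Q̃_p Λ̃ Q̃_{p−1}ᵀ for 1 ≤ p ≤ N, and R_p = Q̃_pᵀ Q_p for 0 ≤ p ≤ N. If R_{p+1} = R_{p−1} for all 1 ≤ p ≤ N−1, then for every t ∈ [0,1] the straight line W_p(t) = (1−t)A_p + t B_p satisfies the balance constraints W_{p+1}(t)ᵀW_{p+1}(t) = W_p(t)W_p(t)ᵀ for all 1 ≤ p ≤ N−1. -/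
open Matrix

private lemma key_aux {d : ℕ} (X Y U U' V V' L M : Matrix (Fin d) (Fin d) ℝ)
    (hL : Lᵀ = L) (hM : Mᵀ = M) (h : Uᵀ * U' = Vᵀ * V') :
    (U * L * Xᵀ)ᵀ * (U' * M * Yᵀ) = (X * L * Vᵀ) * (Y * M * V'ᵀ)ᵀ := by
  simp only [transpose_mul, transpose_transpose, hL, hM, Matrix.mul_assoc]
  rw [← Matrix.mul_assoc Uᵀ U', h, Matrix.mul_assoc]

/-- With `A_p = Q_p Λ Q_{p−1}ᵀ`, `B_p = Q̃_p Λ̃ Q̃_{p−1}ᵀ` and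
`R_p = Q̃_pᵀ Q_p`, if `R_{p+1} = R_{p−1}` for all `1 ≤ p ≤ N−1`, then for every
`t ∈ [0,1]` the straight line `W_p(t) = (1−t)A_p + tB_p` satisfies the balance
constraints for all `1 ≤ p ≤ N−1`. -/
theorem straight_line_balanced_of_R_eq {d N : ℕ} (hN : 2 ≤ N)
    (Λ Λ' : Matrix (Fin d) (Fin d) ℝ)
    (hΛdiag : Λ.IsDiag) (hΛ'diag : Λ'.IsDiag)
    (hΛpos : ∀ i, 0 < Λ i i) (hΛ'pos : ∀ i, 0 < Λ' i i)
    (Q Q' : ℕ → Matrix (Fin d) (Fin d) ℝ)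
    (hQ : ∀ p, p ≤ N → (Q p)ᵀ * Q p = 1)
    (hQ' : ∀ p, p ≤ N → (Q' p)ᵀ * Q' p = 1)
    (A B R : ℕ → Matrix (Fin d) (Fin d) ℝ)
    (hAdef : ∀ p, 1 ≤ p → p ≤ N → A p = Q p * Λ * (Q (p - 1))ᵀ)
    (hBdef : ∀ p, 1 ≤ p → p ≤ N → B p = Q' p * Λ' * (Q' (p - 1))ᵀ)
    (hRdef : ∀ p, p ≤ N → R p = (Q' p)ᵀ * Q p)
    (hR : ∀ p, 1 ≤ p → p + 1 ≤ N → R (p + 1) = R (p - 1)) :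
    ∀ t : ℝ, t ∈ Set.Icc (0 : ℝ) 1 → ∀ p, 1 ≤ p → p + 1 ≤ N →
      ((1 - t) • A (p + 1) + t • B (p + 1))ᵀ * ((1 - t) • A (p + 1) + t • B (p + 1)) =
        ((1 - t) • A p + t • B p) * ((1 - t) • A p + t • B p)ᵀ := by
  intro t _ p hp hpN
  have hΛs : Λᵀ = Λ := hΛdiag.isSymm
  have hΛ's : Λ'ᵀ = Λ' := hΛ'diag.isSymm
  have hA1 : A (p + 1) = Q (p + 1) * Λ * (Q p)ᵀ := by
    have := hAdef (p + 1) (by omega) (by omega); simpa using this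
  have hB1 : B (p + 1) = Q' (p + 1) * Λ' * (Q' p)ᵀ := by
    have := hBdef (p + 1) (by omega) (by omega); simpa using this
  have hAp : A p = Q p * Λ * (Q (p - 1))ᵀ := hAdef p hp (by omega)
  have hBp : B p = Q' p * Λ' * (Q' (p - 1))ᵀ := hBdef p hp (by omega)
  have hRR : (Q' (p + 1))ᵀ * Q (p + 1) = (Q' (p - 1))ᵀ * Q (p - 1) := by
    have h := hR p hp hpN
    rwa [hRdef (p + 1) (by omega), hRdef (p - 1) (by omega)] at h
  have hRRt : (Q (p + 1))ᵀ * Q' (p + 1) = (Q (p - 1))ᵀ * Q' (p - 1) := by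
    have := congrArg Matrix.transpose hRR
    simpa [transpose_mul] using this
  have hQQ : (Q (p + 1))ᵀ * Q (p + 1) = (Q (p - 1))ᵀ * Q (p - 1) := by
    rw [hQ (p + 1) (by omega), hQ (p - 1) (by omega)]
  have hQ'Q' : (Q' (p + 1))ᵀ * Q' (p + 1) = (Q' (p - 1))ᵀ * Q' (p - 1) := by
    rw [hQ' (p + 1) (by omega), hQ' (p - 1) (by omega)]
  have e1 : (A (p + 1))ᵀ * A (p + 1) = A p * (A p)ᵀ := by
    rw [hA1, hAp]; exact key_aux _ _ _ _ _ _ _ _ hΛs hΛs hQQ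
  have e2 : (A (p + 1))ᵀ * B (p + 1) = A p * (B p)ᵀ := by
    rw [hA1, hAp, hB1, hBp]; exact key_aux _ _ _ _ _ _ _ _ hΛs hΛ's hRRt
  have e3 : (B (p + 1))ᵀ * A (p + 1) = B p * (A p)ᵀ := by
    rw [hA1, hAp, hB1, hBp]; exact key_aux _ _ _ _ _ _ _ _ hΛ's hΛs hRR
  have e4 : (B (p + 1))ᵀ * B (p + 1) = B p * (B p)ᵀ := by
    rw [hB1, hBp]; exact key_aux _ _ _ _ _ _ _ _ hΛ's hΛ's hQ'Q'
  simp only [transpose_add, transpose_smul, add_mul, mul_add, smul_mul_assoc,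
    mul_smul_comm, smul_smul, e1, e2, e3, e4, mul_comm t (1 - t)]
end

section
/- Let N ≥ 2, let Λ and Λ̃ be diagonal d×d matrices with positive diagonal entries, and let Q_0, …, Q_N and Q̃_0, …, Q̃_N be orthogonal d×d matrices. Set A_p = Q_p Λ Q_{p−1}ᵀ, B_p = Q̃_p Λ̃ Q̃_{p−1}ᵀ for 1 ≤ p ≤ N, and R_p = Q̃_pᵀ Q_p for 0 ≤ p ≤ N. Then the straight line W_p(t) = (1−t)A_p + t B_p satisfies the balance constraints W_{p+1}(t)ᵀW_{p+1}(t) = W_p(t)W_p(t)ᵀ for all t ∈ (0,1) and all 1 ≤ p ≤ N−1 if and only if for every 1 ≤ p ≤ N−1 the matrix (R_{p+1} − R_{p−1}) Mᵀ is skew-symmetric, where M = Λ̃^{−1} R_p Λ. -/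
open Matrix

/-- With `A_p = Q_p Λ Q_{p−1}ᵀ`, `B_p = Q̃_p Λ̃ Q̃_{p−1}ᵀ` and
`R_p = Q̃_pᵀ Q_p`, the straight line `W_p(t) = (1−t)A_p + tB_p` satisfies the balance
constraints for all `t ∈ (0,1)` and all `1 ≤ p ≤ N−1` if and only if for every
`1 ≤ p ≤ N−1` the matrix `(R_{p+1} − R_{p−1}) Mᵀ` is skew-symmetric, where
`M = Λ̃⁻¹ R_p Λ`. -/
theorem straight_line_balanced_iff_skew {d N : ℕ} (hN : 2 ≤ N)
    (Λ Λ' : Matrix (Fin d) (Fin d) ℝ)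
    (hΛdiag : Λ.IsDiag) (hΛ'diag : Λ'.IsDiag)
    (hΛpos : ∀ i, 0 < Λ i i) (hΛ'pos : ∀ i, 0 < Λ' i i)
    (Q Q' : ℕ → Matrix (Fin d) (Fin d) ℝ)
    (hQ : ∀ p, p ≤ N → (Q p)ᵀ * Q p = 1)
    (hQ' : ∀ p, p ≤ N → (Q' p)ᵀ * Q' p = 1)
    (A B R : ℕ → Matrix (Fin d) (Fin d) ℝ)
    (hAdef : ∀ p, 1 ≤ p → p ≤ N → A p = Q p * Λ * (Q (p - 1))ᵀ)
    (hBdef : ∀ p, 1 ≤ p → p ≤ N → B p = Q' p * Λ' * (Q' (p - 1))ᵀ)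
    (hRdef : ∀ p, p ≤ N → R p = (Q' p)ᵀ * Q p) :
    (∀ t : ℝ, t ∈ Set.Ioo (0 : ℝ) 1 → ∀ p, 1 ≤ p → p + 1 ≤ N →
        ((1 - t) • A (p + 1) + t • B (p + 1))ᵀ * ((1 - t) • A (p + 1) + t • B (p + 1)) =
          ((1 - t) • A p + t • B p) * ((1 - t) • A p + t • B p)ᵀ) ↔
    (∀ p, 1 ≤ p → p + 1 ≤ N →
        ((R (p + 1) - R (p - 1)) * (Λ'⁻¹ * R p * Λ)ᵀ)ᵀ =
          -((R (p + 1) - R (p - 1)) * (Λ'⁻¹ * R p * Λ)ᵀ)) := by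
  -- symmetry of the diagonal matrices
  have hΛs : Λᵀ = Λ := hΛdiag.isSymm
  have hΛ's : Λ'ᵀ = Λ' := hΛ'diag.isSymm
  -- invertibility of Λ'
  have hdet : Λ'.det ≠ 0 := by
    rw [← hΛ'diag.diagonal_diag, Matrix.det_diagonal]
    exact Finset.prod_ne_zero_iff.2 fun i _ => (hΛ'pos i).ne'
  have hΛ'li : Λ'⁻¹ * Λ' = 1 := Matrix.nonsing_inv_mul _ (isUnit_iff_ne_zero.2 hdet)
  have hΛ'ri : Λ' * Λ'⁻¹ = 1 := Matrix.mul_nonsing_inv _ (isUnit_iff_ne_zero.2 hdet)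
  have hΛ'is : (Λ'⁻¹)ᵀ = Λ'⁻¹ := by rw [Matrix.transpose_nonsing_inv, hΛ's]
  -- orthogonality both ways
  have hQr : ∀ p, p ≤ N → Q p * (Q p)ᵀ = 1 := fun p hp =>
    mul_eq_one_comm.mp (hQ p hp)
  have hQ'r : ∀ p, p ≤ N → Q' p * (Q' p)ᵀ = 1 := fun p hp =>
    mul_eq_one_comm.mp (hQ' p hp)
  have main : ∀ p, 1 ≤ p → p + 1 ≤ N →
      ((∀ t : ℝ, t ∈ Set.Ioo (0 : ℝ) 1 →
        ((1 - t) • A (p + 1) + t • B (p + 1))ᵀ * ((1 - t) • A (p + 1) + t • B (p + 1)) =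
          ((1 - t) • A p + t • B p) * ((1 - t) • A p + t • B p)ᵀ) ↔
      (((R (p + 1) - R (p - 1)) * (Λ'⁻¹ * R p * Λ)ᵀ)ᵀ =
          -((R (p + 1) - R (p - 1)) * (Λ'⁻¹ * R p * Λ)ᵀ))) := by
    intro p hp hpN
    have hpN' : p ≤ N := le_trans (Nat.le_succ p) hpN
    have hpN'' : p - 1 ≤ N := le_trans (Nat.sub_le p 1) hpN'
    set a := A (p + 1) with ha
    set b := B (p + 1) with hb
    set a' := A p with ha'
    set b' := B p with hb'
    have hadef : a = Q (p+1) * Λ * (Q p)ᵀ := by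
      rw [ha, hAdef (p+1) (by omega) hpN]; norm_num
    have hbdef : b = Q' (p+1) * Λ' * (Q' p)ᵀ := by
      rw [hb, hBdef (p+1) (by omega) hpN]; norm_num
    have ha'def : a' = Q p * Λ * (Q (p-1))ᵀ := hAdef p hp hpN'
    have hb'def : b' = Q' p * Λ' * (Q' (p-1))ᵀ := hBdef p hp hpN'
    -- cancellation helpers
    have c1 : ∀ Z : Matrix (Fin d) (Fin d) ℝ, (Q (p+1))ᵀ * (Q (p+1) * Z) = Z := by
      intro Z; rw [← mul_assoc, hQ _ hpN, one_mul]
    have c2 : ∀ Z : Matrix (Fin d) (Fin d) ℝ, (Q' (p+1))ᵀ * (Q' (p+1) * Z) = Z := by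
      intro Z; rw [← mul_assoc, hQ' _ hpN, one_mul]
    have c3 : ∀ Z : Matrix (Fin d) (Fin d) ℝ, (Q (p-1))ᵀ * (Q (p-1) * Z) = Z := by
      intro Z; rw [← mul_assoc, hQ _ hpN'', one_mul]
    have c4 : ∀ Z : Matrix (Fin d) (Fin d) ℝ, (Q' (p-1))ᵀ * (Q' (p-1) * Z) = Z := by
      intro Z; rw [← mul_assoc, hQ' _ hpN'', one_mul]
    have c5 : ∀ Z : Matrix (Fin d) (Fin d) ℝ, Q p * ((Q p)ᵀ * Z) = Z := by
      intro Z; rw [← mul_assoc, hQr _ hpN', one_mul]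
    have c6 : ∀ Z : Matrix (Fin d) (Fin d) ℝ, Q' p * ((Q' p)ᵀ * Z) = Z := by
      intro Z; rw [← mul_assoc, hQ'r _ hpN', one_mul]
    have c6' : ∀ Z : Matrix (Fin d) (Fin d) ℝ, (Q' p)ᵀ * (Q' p * Z) = Z := by
      intro Z; rw [← mul_assoc, hQ' _ hpN', one_mul]
    have c7 : ∀ Z : Matrix (Fin d) (Fin d) ℝ, Λ'⁻¹ * (Λ' * Z) = Z := by
      intro Z; rw [← mul_assoc, hΛ'li, one_mul]
    have c8 : ∀ Z : Matrix (Fin d) (Fin d) ℝ, Λ' * (Λ'⁻¹ * Z) = Z := by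
      intro Z; rw [← mul_assoc, hΛ'ri, one_mul]
    -- AᵀA = A'A'ᵀ and same for B
    have haa : aᵀ * a = a' * a'ᵀ := by
      rw [hadef, ha'def]
      simp only [Matrix.transpose_mul, Matrix.transpose_transpose, hΛs, Matrix.mul_assoc,
        c1, c3]
    have hbb : bᵀ * b = b' * b'ᵀ := by
      rw [hbdef, hb'def]
      simp only [Matrix.transpose_mul, Matrix.transpose_transpose, hΛ's, Matrix.mul_assoc,
        c2, c4]
    set D : Matrix (Fin d) (Fin d) ℝ :=
      aᵀ * b + bᵀ * a - (a' * b'ᵀ + b' * a'ᵀ) with hD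
    have expand : ∀ t : ℝ,
        ((1 - t) • a + t • b)ᵀ * ((1 - t) • a + t • b) -
          ((1 - t) • a' + t • b') * ((1 - t) • a' + t • b')ᵀ = (t * (1 - t)) • D := by
      intro t
      rw [hD]
      simp only [Matrix.transpose_add, Matrix.transpose_smul, Matrix.add_mul, Matrix.mul_add,
        Matrix.smul_mul, Matrix.mul_smul, smul_smul]
      rw [haa, hbb]
      module
    -- first equivalence : balance for all t ↔ D = 0
    have step1 : (∀ t : ℝ, t ∈ Set.Ioo (0 : ℝ) 1 →
        ((1 - t) • a + t • b)ᵀ * ((1 - t) • a + t • b) =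
          ((1 - t) • a' + t • b') * ((1 - t) • a' + t • b')ᵀ) ↔ D = 0 := by
      constructor
      · intro h
        have h2 := h (1/2) (by norm_num)
        have := expand (1/2)
        rw [sub_eq_zero.mpr h2] at this
        have h4 : ((1:ℝ)/2 * (1 - 1/2)) ≠ 0 := by norm_num
        exact (smul_eq_zero_iff_right h4).mp this.symm
      · intro h t _
        have := expand t
        rw [h, smul_zero, sub_eq_zero] at this
        exact this
    rw [step1]
    -- rewrite D in terms of R's
    set E : Matrix (Fin d) (Fin d) ℝ := R (p+1) - R (p-1) with hE
    set X : Matrix (Fin d) (Fin d) ℝ := Q p * Λ * Eᵀ * Λ' * (Q' p)ᵀ with hX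
    have hab : aᵀ * b = Q p * (Λ * ((R (p+1))ᵀ * (Λ' * (Q' p)ᵀ))) := by
      rw [hadef, hbdef, hRdef _ hpN]
      simp only [Matrix.transpose_mul, Matrix.transpose_transpose, hΛs, Matrix.mul_assoc]
    have ha'b' : a' * b'ᵀ = Q p * (Λ * ((R (p-1))ᵀ * (Λ' * (Q' p)ᵀ))) := by
      rw [ha'def, hb'def, hRdef _ hpN'']
      simp only [Matrix.transpose_mul, Matrix.transpose_transpose, hΛ's, Matrix.mul_assoc]
    have hDX : D = X + Xᵀ := by
      have hba : bᵀ * a = (aᵀ * b)ᵀ := by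
        simp [Matrix.transpose_mul]
      have hb'a' : b' * a'ᵀ = (a' * b'ᵀ)ᵀ := by
        simp [Matrix.transpose_mul]
      rw [hD, hba, hb'a', hab, ha'b', hX, hE]
      simp only [Matrix.transpose_sub, Matrix.sub_mul, Matrix.mul_sub,
        Matrix.transpose_mul, Matrix.transpose_transpose, hΛs, hΛ's, Matrix.mul_assoc]
      abel
    rw [hDX]
    -- now relate X + Xᵀ = 0 with Y + Yᵀ = 0
    set Y : Matrix (Fin d) (Fin d) ℝ := E * (Λ'⁻¹ * R p * Λ)ᵀ with hY
    have hYe : Y = E * (Λ * ((Q p)ᵀ * (Q' p * Λ'⁻¹))) := by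
      rw [hY, hRdef _ hpN']
      simp only [Matrix.transpose_mul, Matrix.transpose_transpose, hΛs, hΛ'is,
        Matrix.mul_assoc]
    have c9 : Q' p * (Q' p)ᵀ = 1 := hQ'r _ hpN'
    have hXt : Xᵀ = (Q' p * Λ') * Y * (Λ' * (Q' p)ᵀ) := by
      rw [hX, hYe]
      simp only [Matrix.transpose_mul, Matrix.transpose_transpose, hΛs, hΛ's,
        Matrix.mul_assoc, c7, c9, Matrix.mul_one]
    have key : X + Xᵀ = (Q' p * Λ') * (Y + Yᵀ) * (Λ' * (Q' p)ᵀ) := by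
      calc X + Xᵀ = (Xᵀ)ᵀ + Xᵀ := by rw [Matrix.transpose_transpose]
        _ = ((Q' p * Λ') * Y * (Λ' * (Q' p)ᵀ))ᵀ + (Q' p * Λ') * Y * (Λ' * (Q' p)ᵀ) := by
            rw [hXt]
        _ = (Q' p * Λ') * Yᵀ * (Λ' * (Q' p)ᵀ) + (Q' p * Λ') * Y * (Λ' * (Q' p)ᵀ) := by
            simp only [Matrix.transpose_mul, Matrix.transpose_transpose, hΛ's,
              Matrix.mul_assoc]
        _ = (Q' p * Λ') * (Y + Yᵀ) * (Λ' * (Q' p)ᵀ) := by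
            rw [Matrix.mul_add, Matrix.add_mul, add_comm]
    have equiv2 : X + Xᵀ = 0 ↔ Y + Yᵀ = 0 := by
      rw [key]
      constructor
      · intro h
        have h2 : (Λ'⁻¹ * (Q' p)ᵀ) * ((Q' p * Λ') * (Y + Yᵀ) * (Λ' * (Q' p)ᵀ)) *
            (Q' p * Λ'⁻¹) = 0 := by rw [h]; simp
        calc Y + Yᵀ = (Λ'⁻¹ * (Q' p)ᵀ) * ((Q' p * Λ') * (Y + Yᵀ) * (Λ' * (Q' p)ᵀ)) *
              (Q' p * Λ'⁻¹) := by
              simp only [Matrix.mul_assoc, c6', c7, hΛ'ri, Matrix.mul_one]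
          _ = 0 := h2
      · intro h; rw [h]; simp
    rw [equiv2, add_comm, add_eq_zero_iff_eq_neg]
  constructor
  · intro h p hp hpN
    exact (main p hp hpN).mp (fun t ht => h t ht p hp hpN)
  · intro h t ht p hp hpN
    exact (main p hp hpN).mpr (h p hp hpN) t ht
end

section
/- Let N ≥ 2, let Λ and Λ̃ be diagonal d×d matrices with positive diagonal entries, and let U, V, Ũ, Ṽ, Q be orthogonal d×d matrices with Ũ = UQ and Ṽ = VQ. Define the tuples A_N = UΛ, A_p = Λ for 2 ≤ p ≤ N−1, A_1 = ΛVᵀ, and B_N = ŨΛ̃Qᵀ, B_p = QΛ̃Qᵀ for 2 ≤ p ≤ N−1, B_1 = QΛ̃Ṽᵀ. Then for every t ∈ [0,1] the straight line W_p(t) = (1−t)A_p + t B_p satisfies the balance constraints W_{p+1}(t)ᵀW_{p+1}(t) = W_p(t)W_p(t)ᵀ for all 1 ≤ p ≤ N−1. -/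
open Matrix

/-- Let `N ≥ 2`, let `Λ, Λ̃` be diagonal with positive diagonal, and let
`U, V, Ũ, Ṽ, Q` be orthogonal with `Ũ = UQ`, `Ṽ = VQ`. With the balanced lifts
`A_N = UΛ`, `A_p = Λ` (`2 ≤ p ≤ N−1`), `A_1 = ΛVᵀ` and
`B_N = ŨΛ̃Qᵀ`, `B_p = QΛ̃Qᵀ` (`2 ≤ p ≤ N−1`), `B_1 = QΛ̃Ṽᵀ`, the straight line
`W_p(t) = (1−t)A_p + tB_p` satisfies the balance constraints for all `t ∈ [0,1]`
and all `1 ≤ p ≤ N−1`. -/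
theorem lift_line_balanced {d N : ℕ} (hN : 2 ≤ N)
    (Λ Λ' : Matrix (Fin d) (Fin d) ℝ)
    (hΛdiag : Λ.IsDiag) (hΛ'diag : Λ'.IsDiag)
    (hΛpos : ∀ i, 0 < Λ i i) (hΛ'pos : ∀ i, 0 < Λ' i i)
    (U V U' V' Q : Matrix (Fin d) (Fin d) ℝ)
    (hU : Uᵀ * U = 1) (hV : Vᵀ * V = 1) (hU' : U'ᵀ * U' = 1) (hV' : V'ᵀ * V' = 1)
    (hQ : Qᵀ * Q = 1) (hUQ : U' = U * Q) (hVQ : V' = V * Q)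
    (A B : ℕ → Matrix (Fin d) (Fin d) ℝ)
    (hAN : A N = U * Λ) (hA1 : A 1 = Λ * Vᵀ)
    (hAmid : ∀ p, 2 ≤ p → p ≤ N - 1 → A p = Λ)
    (hBN : B N = U' * Λ' * Qᵀ) (hB1 : B 1 = Q * Λ' * V'ᵀ)
    (hBmid : ∀ p, 2 ≤ p → p ≤ N - 1 → B p = Q * Λ' * Qᵀ) :
    ∀ t : ℝ, t ∈ Set.Icc (0 : ℝ) 1 → ∀ p, 1 ≤ p → p + 1 ≤ N →
      ((1 - t) • A (p + 1) + t • B (p + 1))ᵀ * ((1 - t) • A (p + 1) + t • B (p + 1)) =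
        ((1 - t) • A p + t • B p) * ((1 - t) • A p + t • B p)ᵀ := by
  intro t ht p hp hpN
  set M : Matrix (Fin d) (Fin d) ℝ := (1 - t) • Λ + t • (Q * Λ' * Qᵀ) with hM
  have hΛsymm : Λᵀ = Λ := hΛdiag.isSymm
  have hΛ'symm : Λ'ᵀ = Λ' := hΛ'diag.isSymm
  have hMsymm : Mᵀ = M := by
    rw [hM, transpose_add, transpose_smul, transpose_smul, hΛsymm, Matrix.transpose_mul,
      Matrix.transpose_mul, transpose_transpose, hΛ'symm, Matrix.mul_assoc]
  have hVVt : V * Vᵀ = 1 := mul_eq_one_comm.mp hV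
  have hL : ((1 - t) • A (p + 1) + t • B (p + 1))ᵀ * ((1 - t) • A (p + 1) + t • B (p + 1))
      = M * M := by
    rcases eq_or_lt_of_le hpN with h | h
    · rw [h, hAN, hBN, hUQ]
      have hW : (1 - t) • (U * Λ) + t • (U * Q * Λ' * Qᵀ) = U * M := by
        rw [hM, Matrix.mul_add, Matrix.mul_smul, Matrix.mul_smul, Matrix.mul_assoc,
          Matrix.mul_assoc, Matrix.mul_assoc]
      rw [hW, Matrix.transpose_mul, Matrix.mul_assoc, ← Matrix.mul_assoc Uᵀ, hU,
        Matrix.one_mul, hMsymm]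
    · have h2 : 2 ≤ p + 1 := by omega
      have hle : p + 1 ≤ N - 1 := by omega
      rw [hAmid _ h2 hle, hBmid _ h2 hle, ← hM, hMsymm]
  have hR : ((1 - t) • A p + t • B p) * ((1 - t) • A p + t • B p)ᵀ = M * M := by
    rcases eq_or_lt_of_le hp with h | h
    · rw [← h, hA1, hB1, hVQ]
      have hW : (1 - t) • (Λ * Vᵀ) + t • (Q * Λ' * (V * Q)ᵀ) = M * Vᵀ := by
        rw [hM, Matrix.add_mul, Matrix.smul_mul, Matrix.smul_mul, Matrix.transpose_mul,
          ← Matrix.mul_assoc, Matrix.mul_assoc (Q * Λ')]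
      rw [hW, Matrix.transpose_mul, transpose_transpose, ← Matrix.mul_assoc,
        Matrix.mul_assoc M, hV, Matrix.mul_one, hMsymm]
    · have h2 : 2 ≤ p := h
      have hle : p ≤ N - 1 := by omega
      rw [hAmid _ h2 hle, hBmid _ h2 hle, ← hM, hMsymm]
  exact hL.trans hR.symm
end

section
/- Let A and B be positive definite real d×d matrices, let G = A^{−1}#B, and define X(t) = (tG + (1−t)I) A (tG + (1−t)I) for t ∈ ℝ. Then X(0) = A, X(1) = B, and for all t, X(t) = (1−t)² A + t² B + t(1−t)(A·G + G·A). (Since A·G and G·A are square roots of AB and BA respectively, this is the Bures–Wasserstein geodesic formula X(t) = (1−t)²A + t²B + t(1−t)((AB)^{1/2} + (BA)^{1/2}).) -/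
/-!
The geometric mean `G = A # B` solves the Riccati equation `G A⁻¹ G = B`: with `T = A^{1/2}` and
`S = (T⁻¹ B T⁻¹)^{1/2}` one has `G = T S T` and `A⁻¹ = T⁻¹ T⁻¹`, so `G A⁻¹ G = T S² T = B`.
Applied to `A⁻¹` this gives `G A G = B` for `G = A⁻¹ # B`, and the formula for `X(t)` is the
expansion of `(tG + (1-t)) A (tG + (1-t))` with `G A G` replaced by `B`.
-/

open Matrix
open scoped Classical

/-- The positive semidefinite square root, extended by `0` to all matrices. -/
noncomputable def msqrt {d : ℕ} (M : Matrix (Fin d) (Fin d) ℝ) : Matrix (Fin d) (Fin d) ℝ :=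
  if h : M.PosSemidef then
    (h.1.eigenvectorUnitary : Matrix (Fin d) (Fin d) ℝ) *
      diagonal ((RCLike.ofReal : ℝ → ℝ) ∘ (Real.sqrt ·) ∘ h.1.eigenvalues) *
      (star h.1.eigenvectorUnitary : Matrix (Fin d) (Fin d) ℝ)
  else 0

/-- The geometric mean `A # B = A^{1/2} (A^{-1/2} B A^{-1/2})^{1/2} A^{1/2}` of positive
definite matrices. -/
noncomputable def geoMean {d : ℕ} (A B : Matrix (Fin d) (Fin d) ℝ) :
    Matrix (Fin d) (Fin d) ℝ :=
  msqrt A * msqrt ((msqrt A)⁻¹ * B * (msqrt A)⁻¹) * msqrt A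

section
open scoped MatrixOrder
variable {d : ℕ} {M : Matrix (Fin d) (Fin d) ℝ}

theorem msqrt_eq_sqrt (h : M.PosSemidef) : msqrt M = CFC.sqrt M := by
  rw [CFC.sqrt_eq_real_sqrt M h.nonneg, cfcₙ_eq_cfc, h.1.cfc_eq]
  simp [msqrt, h, IsHermitian.cfc]

theorem msqrt_mul_msqrt (h : M.PosSemidef) : msqrt M * msqrt M = M := by
  rw [msqrt_eq_sqrt h, CFC.sqrt_mul_sqrt_self M h.nonneg]

theorem isHermitian_msqrt (M : Matrix (Fin d) (Fin d) ℝ) : (msqrt M).IsHermitian := by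
  by_cases h : M.PosSemidef
  · rw [msqrt_eq_sqrt h]
    exact (CFC.sqrt_nonneg M).posSemidef.isHermitian
  · simp [msqrt, h]
end

theorem geoMean_mul_inv_mul_geoMean {d : ℕ} {A B : Matrix (Fin d) (Fin d) ℝ}
    (hA : A.PosDef) (hB : B.PosSemidef) : geoMean A B * A⁻¹ * geoMean A B = B := by
  set T := msqrt A
  have hTT : T * T = A := msqrt_mul_msqrt hA.posSemidef
  have hT : IsUnit T := isUnit_of_mul_isUnit_left (hTT ▸ hA.isUnit)
  have hTdet : IsUnit T.det := (isUnit_iff_isUnit_det T).mp hT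
  have hAinv : A⁻¹ = T⁻¹ * T⁻¹ := by rw [← hTT, Matrix.mul_inv_rev]
  have hC : (T⁻¹ * B * T⁻¹).PosSemidef := by
    have h := hB.conjTranspose_mul_mul_same T⁻¹
    rwa [(isHermitian_msqrt A).inv.eq] at h
  have hSS := msqrt_mul_msqrt hC
  set S := msqrt (T⁻¹ * B * T⁻¹)
  calc geoMean A B * A⁻¹ * geoMean A B
      = T * S * (T * T⁻¹) * (T⁻¹ * T) * S * T := by
        rw [show geoMean A B = T * S * T from rfl, hAinv]; simp only [mul_assoc]
    _ = T * (S * S) * T := by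
        rw [mul_nonsing_inv T hTdet, nonsing_inv_mul T hTdet]; simp only [mul_one, mul_assoc]
    _ = (T * T⁻¹) * B * (T⁻¹ * T) := by rw [hSS]; simp only [mul_assoc]
    _ = B := by rw [mul_nonsing_inv T hTdet, nonsing_inv_mul T hTdet, one_mul, mul_one]

theorem smul_add_smul_one_mul_mul_eq {R M : Type*} [CommRing R] [Ring M] [Algebra R M]
    {A B G : M} (h : G * A * G = B) (t : R) :
    (t • G + (1 - t) • 1) * A * (t • G + (1 - t) • 1) =
      (1 - t) ^ 2 • A + t ^ 2 • B + (t * (1 - t)) • (A * G + G * A) := by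
  subst h
  simp only [add_mul, mul_add, smul_mul_assoc, mul_smul_comm, smul_smul, one_mul, mul_one,
    smul_add]
  module

/-- For positive definite `A, B`, with `G = A⁻¹ # B` and
`X(t) = (tG + (1−t)I) A (tG + (1−t)I)`, one has `X(0) = A`, `X(1) = B`, and
`X(t) = (1−t)² A + t² B + t(1−t)(A·G + G·A)` for all `t` — the Bures–Wasserstein
geodesic formula `X(t) = (1−t)²A + t²B + t(1−t)((AB)^{1/2} + (BA)^{1/2})`. -/
theorem bw_geodesic_formula {d : ℕ} (A B : Matrix (Fin d) (Fin d) ℝ)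
    (hA : A.PosDef) (hB : B.PosDef) :
    (fun t : ℝ => (t • geoMean A⁻¹ B + (1 - t) • (1 : Matrix (Fin d) (Fin d) ℝ)) * A *
        (t • geoMean A⁻¹ B + (1 - t) • (1 : Matrix (Fin d) (Fin d) ℝ))) 0 = A ∧
    (fun t : ℝ => (t • geoMean A⁻¹ B + (1 - t) • (1 : Matrix (Fin d) (Fin d) ℝ)) * A *
        (t • geoMean A⁻¹ B + (1 - t) • (1 : Matrix (Fin d) (Fin d) ℝ))) 1 = B ∧
    ∀ t : ℝ,
      (t • geoMean A⁻¹ B + (1 - t) • (1 : Matrix (Fin d) (Fin d) ℝ)) * A *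
          (t • geoMean A⁻¹ B + (1 - t) • (1 : Matrix (Fin d) (Fin d) ℝ)) =
        (1 - t) ^ 2 • A + t ^ 2 • B +
          (t * (1 - t)) • (A * geoMean A⁻¹ B + geoMean A⁻¹ B * A) := by
  have hRiccati : geoMean A⁻¹ B * A * geoMean A⁻¹ B = B := by
    have h := geoMean_mul_inv_mul_geoMean hA.inv hB.posSemidef
    rwa [nonsing_inv_nonsing_inv A ((isUnit_iff_isUnit_det A).mp hA.isUnit)] at h
  have hX (t : ℝ) := smul_add_smul_one_mul_mul_eq hRiccati t
  exact ⟨by simp, by simpa using hX 1, hX⟩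
end

section
/- Let N ≥ 1, let λ_1, …, λ_d be distinct positive real numbers, and let Q_0, Q_1, …, Q_N be orthogonal d×d matrices with columns q_{s,k} (k-th column of Q_s). Define the following tuples of d×d matrices, indexed by s = 1, …, N: l^k with components l^k_s = (1/√N) q_{s,k} q_{s−1,k}ᵀ for 1 ≤ k ≤ d; u^{k,l,0} with components u^{k,l,0}_s = sqrt((λ_k² − λ_l²)/(λ_k^{2N} − λ_l^{2N})) λ_k^{s−1} λ_l^{N−s} q_{s,l} q_{s−1,k}ᵀ for 1 ≤ k < l ≤ d; and u^{k,l,N} with components u^{k,l,N}_s = sqrt((λ_k² − λ_l²)/(λ_k^{2N} − λ_l^{2N})) λ_k^{N−s} λ_l^{s−1} q_{s,k} q_{s−1,l}ᵀ for 1 ≤ k < l ≤ d. Then this family of d² tuples is orthonormal with respect to the inner product ⟨Z, W⟩ = Σ_{s=1}^N Tr(Z_sᵀ W_s): each tuple has norm 1 and any two distinct tuples in the family are orthogonal. -/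
open Matrix

/-- Inner product on `N`-tuples of `d × d` matrices (components indexed `1, …, N`):
`⟨Z, W⟩ = Σ_{s=1}^N Tr(Z_sᵀ W_s)`. -/
noncomputable def tupleInner {d : ℕ} (N : ℕ) (Z W : ℕ → Matrix (Fin d) (Fin d) ℝ) : ℝ :=
  ∑ s ∈ Finset.Icc 1 N, ((Z s)ᵀ * W s).trace

/-- The tuple `l^k` with components `l^k_s = (1/√N) q_{s,k} q_{s−1,k}ᵀ`. -/
noncomputable def lTuple {d : ℕ} (N : ℕ) (Q : ℕ → Matrix (Fin d) (Fin d) ℝ) (k : Fin d) :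
    ℕ → Matrix (Fin d) (Fin d) ℝ :=
  fun s => (1 / Real.sqrt N) • vecMulVec (fun i => Q s i k) (fun i => Q (s - 1) i k)

/-- The tuple `u^{k,l,0}` with components
`u^{k,l,0}_s = √((λ_k² − λ_l²)/(λ_k^{2N} − λ_l^{2N})) λ_k^{s−1} λ_l^{N−s} q_{s,l} q_{s−1,k}ᵀ`. -/
noncomputable def u0Tuple {d : ℕ} (N : ℕ) (lam : Fin d → ℝ)
    (Q : ℕ → Matrix (Fin d) (Fin d) ℝ) (k l : Fin d) : ℕ → Matrix (Fin d) (Fin d) ℝ :=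
  fun s => (Real.sqrt ((lam k ^ 2 - lam l ^ 2) / (lam k ^ (2 * N) - lam l ^ (2 * N))) *
      lam k ^ (s - 1) * lam l ^ (N - s)) •
    vecMulVec (fun i => Q s i l) (fun i => Q (s - 1) i k)

/-- The tuple `u^{k,l,N}` with components
`u^{k,l,N}_s = √((λ_k² − λ_l²)/(λ_k^{2N} − λ_l^{2N})) λ_k^{N−s} λ_l^{s−1} q_{s,k} q_{s−1,l}ᵀ`. -/
noncomputable def uNTuple {d : ℕ} (N : ℕ) (lam : Fin d → ℝ)
    (Q : ℕ → Matrix (Fin d) (Fin d) ℝ) (k l : Fin d) : ℕ → Matrix (Fin d) (Fin d) ℝ :=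
  fun s => (Real.sqrt ((lam k ^ 2 - lam l ^ 2) / (lam k ^ (2 * N) - lam l ^ (2 * N))) *
      lam k ^ (N - s) * lam l ^ (s - 1)) •
    vecMulVec (fun i => Q s i k) (fun i => Q (s - 1) i l)

/-- The whole family of `d²` tuples `{l^k} ∪ {u^{k,l,0}} ∪ {u^{k,l,N}}`, indexed by
`Fin d ⊕ {(k,l) : k < l} ⊕ {(k,l) : k < l}`. -/
noncomputable def dlnHorizontalFamily {d : ℕ} (N : ℕ) (lam : Fin d → ℝ)
    (Q : ℕ → Matrix (Fin d) (Fin d) ℝ) :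
    (Fin d ⊕ ({p : Fin d × Fin d // p.1 < p.2} ⊕ {p : Fin d × Fin d // p.1 < p.2})) →
      ℕ → Matrix (Fin d) (Fin d) ℝ :=
  Sum.elim (lTuple N Q)
    (Sum.elim (fun p => u0Tuple N lam Q p.1.1 p.1.2) (fun p => uNTuple N lam Q p.1.1 p.1.2))
open Finset

/-! Every tuple of the family has the shape `s ↦ c_s • q_{s,a} q_{s-1,b}ᵀ` for an index
pair `(a, b)`: `(k, k)` for `l^k`, `(l, k)` for `u^{k,l,0}` and `(k, l)` for `u^{k,l,N}`.
Since `Tr ((q_a q_bᵀ)ᵀ q_{a'} q_{b'}ᵀ) = ⟨q_a, q_{a'}⟩ ⟨q_b, q_{b'}⟩` and the columns of each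
`Q_s` are orthonormal, tuples with different index pairs are orthogonal; and the pairs are
diagonal, below or above the diagonal according to the kind of tuple, so distinct tuples have
distinct pairs.
The squared norm is `∑_s c_s²`: for `l^k` this is `N · (1/N)`, for `u^{k,l,·}` it is the
geometric sum `∑_s a^{s-1} b^{N-s} = (a^N - b^N)/(a - b)` with `a = λ_k²`, `b = λ_l²`, which the
normalising constant cancels. -/

theorem trace_transpose_smul_vecMulVec_mul_smul_vecMulVec {ι R : Type*} [Fintype ι]
    [CommSemiring R] (α β : R) (a b a' b' : ι → R) :
    ((α • vecMulVec a b)ᵀ * (β • vecMulVec a' b')).trace =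
      α * β * (a ⬝ᵥ a') * (b ⬝ᵥ b') := by
  rw [transpose_smul, transpose_vecMulVec, smul_mul_smul_comm, vecMulVec_mul_vecMulVec,
    trace_smul, trace_vecMulVec, dotProduct_smul, smul_eq_mul, smul_eq_mul]
  ring

theorem dotProduct_col_col_of_transpose_mul_self {ι R : Type*} [Fintype ι] [DecidableEq ι]
    [CommSemiring R] {Q : Matrix ι ι R} (hQ : Qᵀ * Q = 1) (k l : ι) :
    (fun i => Q i k) ⬝ᵥ (fun i => Q i l) = if k = l then 1 else 0 := by
  rw [← one_apply, ← hQ, mul_apply']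
  rfl

theorem geom_sum_Icc_mul_sub {R : Type*} [CommRing R] (a b : R) (N : ℕ) :
    (∑ s ∈ Icc 1 N, a ^ (s - 1) * b ^ (N - s)) * (a - b) = a ^ N - b ^ N := by
  rw [← geom_sum₂_mul, ← Ico_add_one_right_eq_Icc, sum_Ico_eq_sum_range, Nat.add_sub_cancel]
  refine congrArg (· * _) (sum_congr rfl fun i _ => ?_)
  congr 2 <;> omega

theorem sub_div_pow_sub_pow_nonneg {K : Type*} [Field K] [LinearOrder K]
    [IsStrictOrderedRing K] {a b : K} (ha : 0 ≤ a) (hb : 0 ≤ b) (N : ℕ) :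
    0 ≤ (a - b) / (a ^ N - b ^ N) := by
  rcases le_total a b with h | h
  · exact div_nonneg_of_nonpos (sub_nonpos.2 h) (sub_nonpos.2 (pow_le_pow_left₀ ha h N))
  · exact div_nonneg (sub_nonneg.2 h) (sub_nonneg.2 (pow_le_pow_left₀ hb h N))

theorem sub_div_pow_sub_pow_mul_geom_sum_Icc {K : Type*} [Field K] [LinearOrder K]
    [IsStrictOrderedRing K] {a b : K} (ha : 0 ≤ a) (hb : 0 ≤ b) (hab : a ≠ b) {N : ℕ}
    (hN : N ≠ 0) :
    (a - b) / (a ^ N - b ^ N) * ∑ s ∈ Icc 1 N, a ^ (s - 1) * b ^ (N - s) = 1 := by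
  have hG : ∑ s ∈ Icc 1 N, a ^ (s - 1) * b ^ (N - s) ≠ 0 := by
    intro hG
    have := geom_sum_Icc_mul_sub a b N
    rw [hG, zero_mul, eq_comm, sub_eq_zero] at this
    exact hab ((pow_left_inj₀ ha hb hN).1 this)
  rw [← geom_sum_Icc_mul_sub]
  field_simp [sub_ne_zero.2 hab]

noncomputable def horizontalNormalizer (N : ℕ) (x y : ℝ) : ℝ :=
  √((x ^ 2 - y ^ 2) / (x ^ (2 * N) - y ^ (2 * N)))

theorem horizontalNormalizer_comm (N : ℕ) (x y : ℝ) :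
    horizontalNormalizer N x y = horizontalNormalizer N y x := by
  rw [horizontalNormalizer, horizontalNormalizer, ← neg_sub, ← neg_sub (y ^ (2 * N)),
    neg_div_neg_eq]

theorem sum_horizontalNormalizer_mul_pow_mul_pow_sq {x y : ℝ} (hxy : x ^ 2 ≠ y ^ 2) {N : ℕ}
    (hN : N ≠ 0) :
    ∑ s ∈ Icc 1 N, (horizontalNormalizer N x y * x ^ (s - 1) * y ^ (N - s)) ^ 2 = 1 := by
  have hnonneg := sub_div_pow_sub_pow_nonneg (sq_nonneg x) (sq_nonneg y) N
  rw [horizontalNormalizer, pow_mul, pow_mul,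
    ← sub_div_pow_sub_pow_mul_geom_sum_Icc (sq_nonneg x) (sq_nonneg y) hxy hN, mul_sum]
  refine sum_congr rfl fun s _ => ?_
  linear_combination (x ^ (s - 1) * y ^ (N - s)) ^ 2 * Real.sq_sqrt hnonneg

section RankOneTuple

variable {d : ℕ}

noncomputable def rankOneTuple (Q : ℕ → Matrix (Fin d) (Fin d) ℝ) (c : ℕ → ℝ)
    (a b : Fin d) : ℕ → Matrix (Fin d) (Fin d) ℝ :=
  fun s => c s • vecMulVec (fun i => Q s i a) (fun i => Q (s - 1) i b)

theorem tupleInner_rankOneTuple {N : ℕ} {Q : ℕ → Matrix (Fin d) (Fin d) ℝ}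
    (hQ : ∀ p, p ≤ N → (Q p)ᵀ * Q p = 1) (c c' : ℕ → ℝ) (a b a' b' : Fin d) :
    tupleInner N (rankOneTuple Q c a b) (rankOneTuple Q c' a' b') =
      if (a, b) = (a', b') then ∑ s ∈ Icc 1 N, c s * c' s else 0 := by
  rw [tupleInner, ite_sum_zero]
  refine sum_congr rfl fun s hs => ?_
  have hsN : s ≤ N := (mem_Icc.1 hs).2
  rw [rankOneTuple, rankOneTuple, trace_transpose_smul_vecMulVec_mul_smul_vecMulVec,
    dotProduct_col_col_of_transpose_mul_self (hQ s hsN),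
    dotProduct_col_col_of_transpose_mul_self (hQ (s - 1) (by omega))]
  split_ifs <;> simp_all

end RankOneTuple

section DlnHorizontalFamily

variable {d : ℕ}

abbrev DlnHorizontalIndex (d : ℕ) : Type :=
  Fin d ⊕ ({p : Fin d × Fin d // p.1 < p.2} ⊕ {p : Fin d × Fin d // p.1 < p.2})

def dlnHorizontalIndexPair : DlnHorizontalIndex d → Fin d × Fin d :=
  Sum.elim (fun k => (k, k)) (Sum.elim (fun p => (p.1.2, p.1.1)) (fun p => p.1))

noncomputable def dlnHorizontalCoeff (N : ℕ) (lam : Fin d → ℝ) :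
    DlnHorizontalIndex d → ℕ → ℝ :=
  Sum.elim (fun _ _ => 1 / √N)
    (Sum.elim
      (fun p s => horizontalNormalizer N (lam p.1.1) (lam p.1.2) *
        lam p.1.1 ^ (s - 1) * lam p.1.2 ^ (N - s))
      (fun p s => horizontalNormalizer N (lam p.1.1) (lam p.1.2) *
        lam p.1.1 ^ (N - s) * lam p.1.2 ^ (s - 1)))

theorem dlnHorizontalFamily_eq_rankOneTuple (N : ℕ) (lam : Fin d → ℝ)
    (Q : ℕ → Matrix (Fin d) (Fin d) ℝ) (i : DlnHorizontalIndex d) :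
    dlnHorizontalFamily N lam Q i = rankOneTuple Q (dlnHorizontalCoeff N lam i)
      (dlnHorizontalIndexPair i).1 (dlnHorizontalIndexPair i).2 := by
  rcases i with _ | _ | _ <;> rfl

theorem dlnHorizontalIndexPair_injective :
    Function.Injective (dlnHorizontalIndexPair (d := d)) := by
  rintro (k | ⟨⟨k, l⟩, hkl⟩ | ⟨⟨k, l⟩, hkl⟩) (k' | ⟨⟨k', l'⟩, hkl'⟩ | ⟨⟨k', l'⟩, hkl'⟩) h
    <;> simp only [dlnHorizontalIndexPair, Sum.elim_inl, Sum.elim_inr, Prod.mk.injEq] at h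
    <;> grind

theorem sum_dlnHorizontalCoeff_sq {N : ℕ} (hN : N ≠ 0) {lam : Fin d → ℝ}
    (hpos : ∀ k, 0 < lam k) (hinj : Function.Injective lam) (i : DlnHorizontalIndex d) :
    ∑ s ∈ Icc 1 N, dlnHorizontalCoeff N lam i s ^ 2 = 1 := by
  have hsq {k l : Fin d} (hkl : k < l) : lam k ^ 2 ≠ lam l ^ 2 := fun h =>
    hkl.ne (hinj ((sq_eq_sq₀ (hpos k).le (hpos l).le).1 h))
  rcases i with k | ⟨⟨k, l⟩, hkl⟩ | ⟨⟨k, l⟩, hkl⟩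
  · simp only [dlnHorizontalCoeff, Sum.elim_inl, sum_const, Nat.card_Icc, nsmul_eq_mul]
    field_simp
    simp [Real.sq_sqrt]
  · exact sum_horizontalNormalizer_mul_pow_mul_pow_sq (hsq hkl) hN
  · rw [← sum_horizontalNormalizer_mul_pow_mul_pow_sq (hsq hkl).symm hN]
    refine sum_congr rfl fun s _ => ?_
    simp only [dlnHorizontalCoeff, Sum.elim_inr, horizontalNormalizer_comm N (lam k)]
    ring

end DlnHorizontalFamily

/-- For `N ≥ 1`, distinct positive `λ_1, …, λ_d`, and orthogonal
`Q_0, …, Q_N`, the family of `d²` tuples `{l^k}`, `{u^{k,l,0}}_{k<l}`, `{u^{k,l,N}}_{k<l}`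
is orthonormal for the inner product `⟨Z, W⟩ = Σ_{s=1}^N Tr(Z_sᵀ W_s)`: each tuple has
norm `1` and distinct tuples are orthogonal. -/
theorem dlnHorizontalFamily_orthonormal {d N : ℕ} (hN : 1 ≤ N)
    (lam : Fin d → ℝ) (hpos : ∀ k, 0 < lam k) (hinj : Function.Injective lam)
    (Q : ℕ → Matrix (Fin d) (Fin d) ℝ)
    (hQ : ∀ p, p ≤ N → (Q p)ᵀ * Q p = 1) :
    ∀ i j, tupleInner N (dlnHorizontalFamily N lam Q i) (dlnHorizontalFamily N lam Q j) =
      if i = j then 1 else 0 := by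
  intro i j
  rw [dlnHorizontalFamily_eq_rankOneTuple, dlnHorizontalFamily_eq_rankOneTuple,
    tupleInner_rankOneTuple hQ]
  simp only [Prod.mk.eta, dlnHorizontalIndexPair_injective.eq_iff]
  split_ifs with hij
  · subst hij
    simpa only [sq] using sum_dlnHorizontalCoeff_sq (Nat.one_le_iff_ne_zero.1 hN) hpos hinj i
  · rfl
end
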